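/- For a disjunctive definite program P with success set SS: the interpretation ⟨∅, SS⟩ is the least model of P among models of the form ⟨∅,T⟩ (ordered by inclusion of T), and ⟨SS, ∅⟩ is the least model of P among models of the form ⟨I,∅⟩ (ordered by inclusion of I); these two models have the same set of false atoms, namely the false atoms of the least two-valued model of P. -/

import Mathlib

/-!
In Kleene's logic a body is false in `⟨I,T⟩` exactly when it is false in the two-valued
interpretation whose true atoms are the non-false ones, `I ∪ T`. Hence `⟨I,T⟩` is a model
iff `I ∪ T` is a prefixed point of `T_P`, and the least prefixed point is the success set.
-/

open Classical

/-- The three truth values: true, false, inadmissible. -/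
inductive TV : Type where
  | t : TV
  | f : TV
  | i : TV
deriving DecidableEq

/-- Kleene strong three-valued conjunction. -/
def TV.and : TV → TV → TV
  | .t, .t => .t
  | .f, _ => .f
  | _, .f => .f
  | _, _ => .i

/-- Kleene strong three-valued disjunction. -/
def TV.or : TV → TV → TV
  | .f, .f => .f
  | .t, _ => .t
  | _, .t => .t
  | _, _ => .i

/-- Ground body formulas over a set `α` of ground atoms:
built from atoms using binary conjunction and disjunction. -/
inductive Body (α : Type*) : Type _ where
  | atom : α → Body α
  | conj : Body α → Body α → Body α
  | disj : Body α → Body α → Body α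

variable {α : Type*}

/-- Value of an atom in the interpretation `⟨I,T⟩` (inadmissible atoms `I`,
true atoms `T`, all other atoms false). -/
noncomputable def atomVal (I T : Set α) (a : α) : TV :=
  if a ∈ T then TV.t else if a ∈ I then TV.i else TV.f

/-- Kleene strong three-valued evaluation of a body formula in `⟨I,T⟩`. -/
noncomputable def beval (I T : Set α) : Body α → TV
  | .atom a => atomVal I T a
  | .conj b c => TV.and (beval I T b) (beval I T c)
  | .disj b c => TV.or (beval I T b) (beval I T c)

/-- A (ground) disjunctive definite program: a set of ground clause instances
`H ← B`, represented as pairs `(H, B)`. -/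
abbrev Program (α : Type*) := Set (α × Body α)

/-- `⟨I,T⟩` is a model of `P`: no clause instance `H ← B` in `P` has `H`
evaluating to F while `B` evaluates to T or I (i.e. head F implies body F). -/
def IsModel (P : Program α) (I T : Set α) : Prop :=
  ∀ c ∈ P, atomVal I T c.1 = TV.f → beval I T c.2 = TV.f

/-- Two-valued truth of a body formula in the two-valued interpretation in
which exactly the atoms of `S` are true. -/
def twoVal (S : Set α) : Body α → Prop
  | .atom a => a ∈ S
  | .conj b c => twoVal S b ∧ twoVal S c
  | .disj b c => twoVal S b ∨ twoVal S c

/-- The two-valued immediate consequence operator `T_P`. -/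
def TP (P : Program α) (S : Set α) : Set α :=
  {a | ∃ c ∈ P, c.1 = a ∧ twoVal S c.2}

theorem twoVal_mono {S S' : Set α} (h : S ⊆ S') :
    ∀ B : Body α, twoVal S B → twoVal S' B := by
  intro B
  induction B with
  | atom a => exact fun hb => h hb
  | conj b c ihb ihc => exact fun hb => ⟨ihb hb.1, ihc hb.2⟩
  | disj b c ihb ihc =>
      exact fun hb => hb.elim (fun x => Or.inl (ihb x)) (fun y => Or.inr (ihc y))

/-- `T_P` as a monotone map on sets of atoms. -/
def TPhom (P : Program α) : Set α →o Set α :=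
  ⟨TP P, by
    intro S S' h a ha
    obtain ⟨c, hc, he, hb⟩ := ha
    exact ⟨c, hc, he, twoVal_mono h _ hb⟩⟩

/-- The success set of `P`: the least fixpoint of `T_P`
(equal to the least two-valued Herbrand model of `P`). -/
def SS (P : Program α) : Set α := OrderHom.lfp (TPhom P)

namespace TV

theorem and_eq_f_iff {x y : TV} : x.and y = .f ↔ x = .f ∨ y = .f := by
  cases x <;> cases y <;> decide

theorem or_eq_f_iff {x y : TV} : x.or y = .f ↔ x = .f ∧ y = .f := by
  cases x <;> cases y <;> decide

end TV

theorem atomVal_eq_f_iff {I T : Set α} {a : α} : atomVal I T a = .f ↔ a ∉ I ∪ T := by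
  unfold atomVal
  split_ifs <;> simp_all

theorem beval_eq_f_iff (I T : Set α) (B : Body α) :
    beval I T B = .f ↔ ¬ twoVal (I ∪ T) B := by
  induction B with
  | atom a => exact atomVal_eq_f_iff
  | conj b c ihb ihc => simp only [beval, twoVal, TV.and_eq_f_iff, ihb, ihc, not_and_or]
  | disj b c ihb ihc => simp only [beval, twoVal, TV.or_eq_f_iff, ihb, ihc, not_or]

theorem isModel_iff_TP_subset {P : Program α} {I T : Set α} :
    IsModel P I T ↔ TP P (I ∪ T) ⊆ I ∪ T := by
  simp only [IsModel, atomVal_eq_f_iff, beval_eq_f_iff, TP, Set.ofPred_subset, Prod.forall]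
  constructor
  · rintro h _ ⟨⟨a, B⟩, hc, rfl, hB⟩
    by_contra ha
    exact h a B hc ha hB
  · intro h a B hc ha hB
    exact ha (h a ⟨(a, B), hc, rfl, hB⟩)

theorem TP_SS_subset (P : Program α) : TP P (SS P) ⊆ SS P :=
  (OrderHom.map_lfp (TPhom P)).le

theorem SS_subset_of_TP_subset {P : Program α} {S : Set α} (h : TP P S ⊆ S) : SS P ⊆ S :=
  OrderHom.lfp_le (TPhom P) h

/-- `⟨∅, SS⟩` is the least model of `P` among models of the form
`⟨∅,T⟩` (ordered by inclusion of `T`), and `⟨SS, ∅⟩` is the least model of `P`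
among models of the form `⟨I,∅⟩` (ordered by inclusion of `I`); these two
models have the same set of false atoms, namely the false atoms of the least
two-valued model of `P` (whose true atoms are `SS P`). -/
theorem least_models_SS {α : Type*} (P : Program α) :
    (IsModel P ∅ (SS P) ∧ ∀ T : Set α, IsModel P ∅ T → SS P ⊆ T) ∧
    (IsModel P (SS P) ∅ ∧ ∀ I : Set α, IsModel P I ∅ → SS P ⊆ I) ∧
    ((∅ ∪ SS P : Set α)ᶜ = (SS P ∪ ∅ : Set α)ᶜ ∧
      (∅ ∪ SS P : Set α)ᶜ = (SS P)ᶜ) := by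
  have h_left (T : Set α) : IsModel P ∅ T ↔ TP P T ⊆ T := by
    rw [isModel_iff_TP_subset, Set.empty_union]
  have h_right (I : Set α) : IsModel P I ∅ ↔ TP P I ⊆ I := by
    rw [isModel_iff_TP_subset, Set.union_empty]
  refine ⟨⟨(h_left _).mpr (TP_SS_subset P),
      fun T hT => SS_subset_of_TP_subset ((h_left T).mp hT)⟩,
    ⟨(h_right _).mpr (TP_SS_subset P),
      fun I hI => SS_subset_of_TP_subset ((h_right I).mp hI)⟩, ?_, ?_⟩ <;> simp only [Set.empty_union, Set.union_empty]
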